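/- arXiv:1005.3096 — 3 statements merged into one kernel-verified Lean document; each statement's English description precedes it below -/
import Mathlib

section
/- Let G be an N×N Hermitian matrix with distinct eigenvalues a_1,…,a_N and corresponding orthonormal eigenvectors, let c ∈ ℝ and v ∈ ℂ^N with all components w_j := |⟨u_j, v⟩|² nonzero, where u_j is the j-th eigenvector. Then a real number λ distinct from all a_j is an eigenvalue of the bordered matrix [[c, v†],[v, G]] if and only if λ − c = Σ_{j=1}^N w_j/(λ − a_j). -/
/-!
By the Schur complement, `det (λ - B) = det (λ - G) * (λ - c - v† (λ - G)⁻¹ v)` for the bordered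
matrix `B`, and `det (λ - G) ≠ 0` when `λ` is not an eigenvalue of `G`. Writing `G = U D U†` with
`U` the unitary matrix of eigenvectors, `v† (λ - G)⁻¹ v = Σ_j |(U† v)_j|² / (λ - a_j)`.
-/

open Matrix BigOperators

namespace Matrix

def bordered {α n : Type*} (c : α) (r s : n → α) (G : Matrix n n α) :
    Matrix (Unit ⊕ n) (Unit ⊕ n) α :=
  fromBlocks (of fun _ _ => c) (of fun _ j => r j) (of fun i _ => s i) G

variable {K : Type*} [Field K] {n : Type*} [Fintype n] [DecidableEq n]

theorem exists_mulVec_eq_smul_iff_det_eq_zero (M : Matrix n n K) (l : K) :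
    (∃ x ≠ 0, M *ᵥ x = l • x) ↔ (l • 1 - M).det = 0 := by
  rw [← exists_mulVec_eq_zero_iff]
  simp only [sub_mulVec, smul_mulVec, one_mulVec, sub_eq_zero, eq_comm]

theorem det_smul_one_sub_bordered (c l : K) (r s : n → K) (G : Matrix n n K)
    (hG : IsUnit (l • 1 - G).det) :
    (l • 1 - bordered c r s G).det = (l • 1 - G).det * (l - c - r ⬝ᵥ ((l • 1 - G)⁻¹ *ᵥ s)) := by
  have := invertibleOfIsUnitDet _ hG
  have hblocks : l • 1 - bordered c r s G =
      fromBlocks (of fun (_ _ : Unit) => l - c) (of fun _ j => -r j) (of fun i _ => -s i)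
        (l • 1 - G) := by
    ext (i | i) (j | j) <;> simp [bordered, one_apply]
  rw [hblocks, det_fromBlocks₂₂, invOf_eq_nonsing_inv, det_unique (n := Unit), dotProduct_mulVec]
  simp [mul_apply, vecMul, dotProduct]

theorem exists_bordered_mulVec_eq_smul_iff (c l : K) (r s : n → K) (G : Matrix n n K)
    (hG : IsUnit (l • 1 - G).det) :
    (∃ x ≠ 0, bordered c r s G *ᵥ x = l • x) ↔ l - c = r ⬝ᵥ ((l • 1 - G)⁻¹ *ᵥ s) := by
  rw [exists_mulVec_eq_smul_iff_det_eq_zero, det_smul_one_sub_bordered c l r s G hG,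
    mul_eq_zero, or_iff_right hG.ne_zero, sub_eq_zero]

section Unitary

variable [StarRing K] {U : Matrix n n K}

theorem conj_diagonal_mul_conj_diagonal (hU : Uᴴ * U = 1) (e f : n → K) :
    U * diagonal e * Uᴴ * (U * diagonal f * Uᴴ) = U * diagonal (fun j => e j * f j) * Uᴴ :=
  calc U * diagonal e * Uᴴ * (U * diagonal f * Uᴴ)
      = U * diagonal e * (Uᴴ * U) * diagonal f * Uᴴ := by simp only [Matrix.mul_assoc]
    _ = U * diagonal (fun j => e j * f j) * Uᴴ := by
      rw [hU, Matrix.mul_one, Matrix.mul_assoc U, diagonal_mul_diagonal]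

theorem smul_one_sub_eq_conj_diagonal (hU : Uᴴ * U = 1) {G : Matrix n n K} {d : n → K}
    (hGU : G * U = U * diagonal d) (l : K) :
    l • 1 - G = U * diagonal (fun j => l - d j) * Uᴴ := by
  have hUU : U * Uᴴ = 1 := mul_eq_one_comm.mp hU
  calc l • 1 - G = l • (U * Uᴴ) - G * (U * Uᴴ) := by rw [hUU, Matrix.mul_one]
    _ = U * diagonal (fun j => l - d j) * Uᴴ := by
      rw [← Matrix.mul_assoc, hGU, ← diagonal_sub, Matrix.mul_sub, Matrix.sub_mul,
        ← smul_one_eq_diagonal, Matrix.mul_smul, Matrix.mul_one, Matrix.smul_mul]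

theorem star_dotProduct_conj_diagonal_mulVec (e v : n → K) :
    star v ⬝ᵥ ((U * diagonal e * Uᴴ) *ᵥ v) = ∑ j, star ((Uᴴ *ᵥ v) j) * (Uᴴ *ᵥ v) j * e j := by
  rw [← mulVec_mulVec, ← mulVec_mulVec, dotProduct_mulVec, ← conjTranspose_conjTranspose U,
    ← star_mulVec, conjTranspose_conjTranspose]
  simp only [dotProduct, mulVec_diagonal, Pi.star_apply]
  exact Finset.sum_congr rfl fun _ _ => by ring

theorem exists_bordered_mulVec_eq_smul_iff_secular (hU : Uᴴ * U = 1) {G : Matrix n n K}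
    {d : n → K} (hGU : G * U = U * diagonal d) (c l : K) (v : n → K) (hl : ∀ j, l ≠ d j) :
    (∃ x ≠ 0, bordered c (star v) v G *ᵥ x = l • x) ↔
      l - c = ∑ j, star ((Uᴴ *ᵥ v) j) * (Uᴴ *ᵥ v) j / (l - d j) := by
  have hres : (l • 1 - G) * (U * diagonal (fun j => (l - d j)⁻¹) * Uᴴ) = 1 := by
    rw [smul_one_sub_eq_conj_diagonal hU hGU, conj_diagonal_mul_conj_diagonal hU]
    simp only [fun j => mul_inv_cancel₀ (sub_ne_zero.mpr (hl j)), diagonal_one, Matrix.mul_one]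
    exact mul_eq_one_comm.mp hU
  rw [exists_bordered_mulVec_eq_smul_iff c l (star v) v G (isUnit_det_of_right_inverse hres),
    inv_eq_right_inv hres, star_dotProduct_conj_diagonal_mulVec]
  simp only [div_eq_mul_inv]

end Unitary

end Matrix

theorem bordered_secular_equation_general
    (N : ℕ) (G : Matrix (Fin N) (Fin N) ℂ)
    (a : Fin N → ℝ) (u : Fin N → (Fin N → ℂ))
    (heig : ∀ j, G.mulVec (u j) = (a j : ℂ) • (u j))
    (hortho : ∀ j k, (∑ i, star (u j i) * u k i) = if j = k then 1 else 0)
    (c : ℝ) (v : Fin N → ℂ)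
    (l : ℝ) (hl : ∀ j, l ≠ a j) :
    (∃ x : Unit ⊕ Fin N → ℂ, x ≠ 0 ∧
        (Matrix.fromBlocks
          (Matrix.of fun (_ _ : Unit) => (c : ℂ))
          (Matrix.of fun (_ : Unit) j => star (v j))
          (Matrix.of fun i (_ : Unit) => v i)
          G).mulVec x = (l : ℂ) • x)
      ↔
    l - c = ∑ j, Complex.normSq (∑ i, star (u j i) * v i) / (l - a j) := by
  set U : Matrix (Fin N) (Fin N) ℂ := of fun i j => u j i
  have hU : Uᴴ * U = 1 := by
    ext j k
    simpa [U, mul_apply, one_apply] using hortho j k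
  have hGU : G * U = U * diagonal (fun j => (a j : ℂ)) := by
    ext i j
    rw [mul_diagonal]
    simpa [U, mul_apply, mulVec, dotProduct, mul_comm] using congrFun (heig j) i
  refine (exists_bordered_mulVec_eq_smul_iff_secular hU hGU _ _ v
    fun j => by exact_mod_cast hl j).trans ?_
  rw [← Complex.ofReal_inj]
  push_cast
  simp [U, mulVec, dotProduct, Complex.normSq_eq_conj_mul_self]

/-- Secular equation for the eigenvalues of a bordered Hermitian matrix:
a real `l` distinct from all eigenvalues `a j` of `G` is an eigenvalue of
`[[c, v†],[v, G]]` iff `l - c = Σ_j |⟨u_j, v⟩|² / (l - a_j)`. -/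
theorem bordered_secular_equation
    (N : ℕ) (G : Matrix (Fin N) (Fin N) ℂ) (hG : G.IsHermitian)
    (a : Fin N → ℝ) (u : Fin N → (Fin N → ℂ))
    (heig : ∀ j, G.mulVec (u j) = (a j : ℂ) • (u j))
    (hortho : ∀ j k, (∑ i, star (u j i) * u k i) = if j = k then 1 else 0)
    (hdistinct : Function.Injective a)
    (c : ℝ) (v : Fin N → ℂ)
    (hw : ∀ j, Complex.normSq (∑ i, star (u j i) * v i) ≠ 0)
    (l : ℝ) (hl : ∀ j, l ≠ a j) :
    (∃ x : Unit ⊕ Fin N → ℂ, x ≠ 0 ∧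
        (Matrix.fromBlocks
          (Matrix.of fun (_ _ : Unit) => (c : ℂ))
          (Matrix.of fun (_ : Unit) j => star (v j))
          (Matrix.of fun i (_ : Unit) => v i)
          G).mulVec x = (l : ℂ) • x)
      ↔
    l - c = ∑ j, Complex.normSq (∑ i, star (u j i) * v i) / (l - a j) :=
  bordered_secular_equation_general N G a u heig hortho c v l hl
end

section
/- Let f : ℝ → ℝ be continuous. Then lim_{r → 0⁺} (1/Γ(r)) ∫_0^x (x−u)^{r−1} f(u) du = f(x) for every x > 0. -/
/-!
Reflecting `u ↦ x - u`, substituting `t = s ^ (1 / r)` and using `r Γ(r) = Γ(r + 1)` turns the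
quantity into `Γ(r + 1)⁻¹ ∫_0^{x^r} f(x - s^{1/r}) ds`. As `r → 0⁺` we have `x ^ r → 1` and
`s ^ (1 / r) → 0` for `0 < s < 1`, so by dominated convergence the integral tends to
`∫_0^1 f(x) ds = f(x)`, while `Γ(r + 1) → Γ(1) = 1`.
-/

open MeasureTheory Set Filter Real
open scoped Topology

theorem rpow_inv_mem_Icc_of_mem_Ioc {r x s : ℝ} (hr : 0 < r) (hx : 0 ≤ x)
    (hs : s ∈ Ioc 0 (x ^ r)) : s ^ r⁻¹ ∈ Icc 0 x := by
  refine ⟨rpow_nonneg hs.1.le _, ?_⟩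
  calc s ^ r⁻¹ ≤ (x ^ r) ^ r⁻¹ := rpow_le_rpow hs.1.le hs.2 (inv_nonneg.2 hr.le)
    _ = x := rpow_rpow_inv hx hr.ne'

theorem tendsto_const_rpow_nhdsGT_zero {x : ℝ} (hx : 0 < x) :
    Tendsto (fun r : ℝ => x ^ r) (𝓝[>] 0) (𝓝 1) := by
  simpa using (continuousAt_const_rpow (b := 0) hx.ne').tendsto.mono_left nhdsWithin_le_nhds

theorem tendsto_indicator_Ioc_rpow_comp_rpow_inv {E : Type*} [TopologicalSpace E] [Zero E]
    {g : ℝ → E} {x s : ℝ} (hx : 0 < x) (hg : ContinuousWithinAt g (Icc 0 x) 0) (hs : s ≠ 1) :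
    Tendsto (fun r : ℝ => (Ioc 0 (x ^ r)).indicator (fun t => g (t ^ r⁻¹)) s) (𝓝[>] 0)
      (𝓝 ((Ioc 0 1).indicator (fun _ => g 0) s)) := by
  have hxr := tendsto_const_rpow_nhdsGT_zero hx
  rcases le_or_gt s 0 with hs0 | hs0
  · simpa [hs0.not_gt] using tendsto_const_nhds
  rcases hs.lt_or_gt with hs1 | hs1
  · have hev : ∀ᶠ r : ℝ in 𝓝[>] 0, 0 < r ∧ s < x ^ r :=
      eventually_mem_nhdsWithin.and (hxr.eventually (eventually_gt_nhds hs1))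
    have hlim : Tendsto (fun r : ℝ => s ^ r⁻¹) (𝓝[>] 0) (𝓝[Icc 0 x] 0) :=
      tendsto_nhdsWithin_iff.2
        ⟨(tendsto_rpow_atTop_of_base_lt_one s (by linarith) hs1).comp tendsto_inv_nhdsGT_zero,
          hev.mono fun r hr => rpow_inv_mem_Icc_of_mem_Ioc hr.1 hx.le (mem_Ioc.2 ⟨hs0, hr.2.le⟩)⟩
    rw [indicator_of_mem (show s ∈ Ioc (0 : ℝ) 1 from ⟨hs0, hs1.le⟩)]
    refine (hg.tendsto.comp hlim).congr' ?_
    filter_upwards [hev] with r hr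
    rw [indicator_of_mem (show s ∈ Ioc 0 (x ^ r) from ⟨hs0, hr.2.le⟩)]
    rfl
  · rw [indicator_of_notMem fun h => h.2.not_gt hs1]
    refine tendsto_const_nhds.congr' ?_
    filter_upwards [hxr.eventually (eventually_lt_nhds hs1)] with r hr
    rw [indicator_of_notMem fun h => h.2.not_gt hr]

section

variable {E : Type*} [NormedAddCommGroup E] [NormedSpace ℝ E]

theorem setIntegral_Ioc_comp_sub_left (g : ℝ → E) {x : ℝ} (hx : 0 ≤ x) :
    ∫ u in Ioc 0 x, g (x - u) = ∫ t in Ioc 0 x, g t := by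
  simpa [intervalIntegral.integral_of_le hx] using
    intervalIntegral.integral_comp_sub_left g (a := 0) (b := x) x

theorem setIntegral_Ioc_rpow_smul_eq_comp_rpow_inv {r x : ℝ} (hr : 0 < r) (hx : 0 ≤ x)
    (g : ℝ → E) :
    ∫ t in Ioc 0 x, (r * t ^ (r - 1)) • g t = ∫ s in Ioc 0 (x ^ r), g (s ^ r⁻¹) := by
  have hsub : ∀ a : ℝ, Ioi 0 ∩ Ioc 0 a = Ioc 0 a := fun a => inter_eq_right.2 Ioc_subset_Ioi_self
  have h := integral_comp_rpow_Ioi_of_pos (g := (Ioc 0 (x ^ r)).indicator fun s => g (s ^ r⁻¹)) hr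
  rw [setIntegral_indicator measurableSet_Ioc, hsub] at h
  rw [← h, ← hsub, ← setIntegral_indicator measurableSet_Ioc]
  refine setIntegral_congr_fun measurableSet_Ioi fun t (ht : 0 < t) => ?_
  have hmem : t ^ r ∈ Ioc 0 (x ^ r) ↔ t ∈ Ioc 0 x := by
    simp [ht, rpow_pos_of_pos ht, rpow_le_rpow_iff ht.le hx hr]
  by_cases htx : t ∈ Ioc 0 x
  · rw [indicator_of_mem htx, indicator_of_mem (hmem.2 htx), rpow_rpow_inv ht.le hr.ne']
  · rw [indicator_of_notMem htx, indicator_of_notMem (mt hmem.1 htx), smul_zero]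

theorem tendsto_setIntegral_Ioc_rpow_comp_rpow_inv [CompleteSpace E] {g : ℝ → E} {x : ℝ}
    (hx : 0 < x) (hg : ContinuousOn g (Icc 0 x)) :
    Tendsto (fun r : ℝ => ∫ s in Ioc (0 : ℝ) (x ^ r), g (s ^ r⁻¹)) (𝓝[>] 0) (𝓝 (g 0)) := by
  obtain ⟨M, hM⟩ := isCompact_Icc.exists_bound_of_continuousOn hg
  have hlimit : ∫ s, (Ioc (0 : ℝ) 1).indicator (fun _ => g 0) s = g 0 := by
    rw [integral_indicator measurableSet_Ioc, setIntegral_const]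
    simp
  simp_rw [← integral_indicator measurableSet_Ioc]
  rw [← hlimit]
  refine tendsto_integral_filter_of_dominated_convergence ((Ioc 0 2).indicator fun _ => M)
    ?_ ?_ ?_ ?_
  · filter_upwards [self_mem_nhdsWithin] with r (hr : 0 < r)
    rw [aestronglyMeasurable_indicator_iff measurableSet_Ioc]
    exact (hg.comp (continuous_rpow_const (inv_nonneg.2 hr.le)).continuousOn
      fun s hs => rpow_inv_mem_Icc_of_mem_Ioc hr hx.le hs).aestronglyMeasurable measurableSet_Ioc
  · filter_upwards [self_mem_nhdsWithin,
      (tendsto_const_rpow_nhdsGT_zero hx).eventually (eventually_lt_nhds one_lt_two)]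
      with r (hr : 0 < r) hr2
    refine Eventually.of_forall fun s => ?_
    by_cases hs : s ∈ Ioc 0 (x ^ r)
    · have hs2 : s ∈ Ioc (0 : ℝ) 2 := ⟨hs.1, hs.2.trans hr2.le⟩
      rw [indicator_of_mem hs, indicator_of_mem hs2]
      exact hM _ (rpow_inv_mem_Icc_of_mem_Ioc hr hx.le hs)
    · rw [indicator_of_notMem hs, norm_zero]
      exact indicator_nonneg (fun _ _ => (norm_nonneg _).trans (hM 0 ⟨le_rfl, hx.le⟩)) s
  · exact (integrable_indicator_iff measurableSet_Ioc).2 (integrableOn_const measure_Ioc_lt_top.ne)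
  · filter_upwards [compl_mem_ae_iff.2 (measure_singleton (1 : ℝ))] with s hs
    exact tendsto_indicator_Ioc_rpow_comp_rpow_inv hx (hg 0 ⟨le_rfl, hx.le⟩) hs

end

theorem tendsto_inv_Gamma_add_one_nhds_zero :
    Tendsto (fun r : ℝ => (Gamma (r + 1))⁻¹) (𝓝 0) (𝓝 1) := by
  have hcont : ContinuousAt (fun r : ℝ => (Gamma (r + 1))⁻¹) 0 := by
    refine ContinuousAt.inv₀ ?_ (by simp)
    refine (differentiableAt_Gamma fun m => ?_).continuousAt.comp
      (continuous_add_const 1).continuousAt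
    have : (0 : ℝ) ≤ m := m.cast_nonneg
    simp only [zero_add]
    linarith
  simpa using hcont.tendsto

/-- `lim_{r → 0⁺} (1/Γ(r)) ∫_0^x (x-u)^{r-1} f(u) du = f(x)` for continuous `f` and `x > 0`. -/
theorem fractional_integral_tendsto
    (f : ℝ → ℝ) (hf : Continuous f) (x : ℝ) (hx : 0 < x) :
    Tendsto (fun r : ℝ =>
        (Real.Gamma r)⁻¹ * ∫ u in Ioc (0 : ℝ) x, Real.rpow (x - u) (r - 1) * f u)
      (nhdsWithin 0 (Ioi 0)) (nhds (f x)) := by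
  have hsubst : ∀ r : ℝ, 0 < r →
      (Gamma r)⁻¹ * ∫ u in Ioc (0 : ℝ) x, Real.rpow (x - u) (r - 1) * f u =
        (Gamma (r + 1))⁻¹ * ∫ s in Ioc 0 (x ^ r), f (x - s ^ r⁻¹) := by
    intro r hr
    calc (Gamma r)⁻¹ * ∫ u in Ioc (0 : ℝ) x, Real.rpow (x - u) (r - 1) * f u
        = (Gamma r)⁻¹ * ∫ t in Ioc 0 x, t ^ (r - 1) * f (x - t) := by
          rw [← setIntegral_Ioc_comp_sub_left _ hx.le]
          simp only [rpow_eq_pow, sub_sub_cancel]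
      _ = (Gamma (r + 1))⁻¹ * ∫ t in Ioc 0 x, (r * t ^ (r - 1)) • f (x - t) := by
          simp only [smul_eq_mul, mul_assoc, integral_const_mul]
          rw [Gamma_add_one hr.ne']
          field_simp
      _ = (Gamma (r + 1))⁻¹ * ∫ s in Ioc 0 (x ^ r), f (x - s ^ r⁻¹) := by
          rw [setIntegral_Ioc_rpow_smul_eq_comp_rpow_inv hr hx.le]
  have hlim := (tendsto_inv_Gamma_add_one_nhds_zero.mono_left nhdsWithin_le_nhds).mul
    (tendsto_setIntegral_Ioc_rpow_comp_rpow_inv hx (hf.comp (continuous_sub_left x)).continuousOn)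
  rw [one_mul, Function.comp_apply, sub_zero] at hlim
  exact hlim.congr' (eventually_nhdsWithin_of_forall fun r hr => (hsubst r hr).symm)
end

section
/- Let σ > 0, σ ≠ 1, μ ∈ ℝ, and define N_p β_p = ∫_{−∞}^∞ e^{−σ^{−2}x² + 2μσ^{−2}x} H_p(x) dx. Then the sequence b_p := N_p β_p satisfies the three-term recurrence b_p = 2μ b_{p−1} + 2(p−1)(σ² − 1) b_{p−2} for all p ≥ 2, and b_1 = 2μ b_0. -/
open MeasureTheory Polynomial Real

/-- The physicists' Hermite polynomials: `H_0 = 1`, `H_1 = 2X`,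
`H_{n+2} = 2X H_{n+1} - 2(n+1) H_n`. -/
noncomputable def physHermite : ℕ → Polynomial ℝ
  | 0 => 1
  | 1 => Polynomial.C 2 * Polynomial.X
  | n + 2 => Polynomial.C 2 * Polynomial.X * physHermite (n + 1)
      - Polynomial.C ((2 * (n + 1) : ℕ) : ℝ) * physHermite n

/-! For the weight `w x = exp (-a x² + b x)`, `a > 0`, put `L P = ∫ w P`. Integrating
`(w P)' = (b - 2a X) w P + w P'` over `ℝ` gives `2a L (X P) = b L P + L P'`. For `P = H_{n+1}`
we have `P' = 2(n+1) H_n`, and substituting `2X H_{n+1} = H_{n+2} + 2(n+1) H_n` yields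
`L H_{n+2} = (b/a) L H_{n+1} + 2(n+1)(a⁻¹ - 1) L H_n`; the theorem is the case `a = σ⁻²`,
`b = 2μσ⁻²`. -/

lemma physHermite_add_two (n : ℕ) :
    physHermite (n + 2)
      = C 2 * X * physHermite (n + 1) - C (2 * ((n : ℝ) + 1)) * physHermite n := by
  rw [physHermite]
  push_cast
  rfl

lemma derivative_physHermite_succ (n : ℕ) :
    derivative (physHermite (n + 1)) = C (2 * ((n : ℝ) + 1)) * physHermite n := by
  induction n using Nat.twoStepInduction with
  | zero => simp [physHermite]
  | one =>
    simp only [physHermite, derivative_mul, derivative_sub, derivative_C, derivative_X]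
    simp only [map_mul, map_natCast, map_add, map_ofNat, map_one, derivative_one]
    push_cast
    ring
  | more n ih₀ ih₁ =>
    rw [physHermite_add_two (n + 1)]
    simp only [derivative_sub, derivative_mul, derivative_C, derivative_X, ih₀, ih₁, zero_mul,
      zero_add, mul_one]
    rw [physHermite_add_two n]
    simp only [map_mul, map_natCast, map_add, map_ofNat, map_one]
    push_cast
    ring

lemma integrable_eval_mul_exp_neg_mul_sq {a : ℝ} (ha : 0 < a) (P : ℝ[X]) :
    Integrable fun x : ℝ => P.eval x * exp (-a * x ^ 2) := by
  simp_rw [eval_eq_sum_range, Finset.sum_mul]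
  refine integrable_finsetSum _ fun i _ => ?_
  simpa [mul_assoc, rpow_natCast] using
    (integrable_rpow_mul_exp_neg_mul_sq ha (neg_one_lt_zero.trans_le i.cast_nonneg)).const_mul
      (P.coeff i)

lemma integrable_exp_quadratic_mul_eval {a : ℝ} (ha : 0 < a) (b : ℝ) (P : ℝ[X]) :
    Integrable fun x : ℝ => exp (-a * x ^ 2 + b * x) * P.eval x := by
  obtain ⟨c, hc⟩ : ∃ c, 2 * a * c = b := ⟨b / (2 * a), by field_simp⟩
  -- complete the square: `-a x² + b x = -a (x - c)² + a c²`
  refine (((integrable_eval_mul_exp_neg_mul_sq ha (P.comp (X + C c))).comp_sub_right c).const_mul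
    (exp (a * c ^ 2))).congr (.of_forall fun x => ?_)
  simp only [eval_comp, eval_add, eval_X, eval_C, sub_add_cancel]
  rw [mul_left_comm, ← exp_add, mul_comm]
  congr 2
  linear_combination x * hc

noncomputable def gaussianFunctional {a : ℝ} (ha : 0 < a) (b : ℝ) : ℝ[X] →ₗ[ℝ] ℝ where
  toFun P := ∫ x : ℝ, exp (-a * x ^ 2 + b * x) * P.eval x
  map_add' P Q := by
    simp only [eval_add, mul_add]
    exact integral_add (integrable_exp_quadratic_mul_eval ha b P)
      (integrable_exp_quadratic_mul_eval ha b Q)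
  map_smul' c P := by
    simp only [eval_smul, smul_eq_mul, mul_left_comm _ c, integral_const_mul, RingHom.id_apply]

section

variable {a : ℝ} (ha : 0 < a) (b : ℝ)

lemma gaussianFunctional_apply (P : ℝ[X]) :
    gaussianFunctional ha b P = ∫ x : ℝ, exp (-a * x ^ 2 + b * x) * P.eval x := rfl

lemma gaussianFunctional_X_mul (P : ℝ[X]) :
    2 * a * gaussianFunctional ha b (X * P)
      = b * gaussianFunctional ha b P + gaussianFunctional ha b (derivative P) := by
  have hparts : ∫ x : ℝ, exp (-a * x ^ 2 + b * x) * (C b * P - C (2 * a) * (X * P)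
      + derivative P).eval x = 0 := by
    refine integral_eq_zero_of_hasDerivAt_of_integrable
      (f := fun x => exp (-a * x ^ 2 + b * x) * P.eval x) (fun x => ?_)
      (integrable_exp_quadratic_mul_eval ha b _) (integrable_exp_quadratic_mul_eval ha b P)
    have hquad : HasDerivAt (fun x : ℝ => -a * x ^ 2 + b * x) (-a * (2 * x) + b) x :=
      (((hasDerivAt_pow 2 x).const_mul (-a)).add ((hasDerivAt_id' x).const_mul b)).congr_deriv
        (by norm_num)
    refine (hquad.exp.mul (P.hasDerivAt x)).congr_deriv ?_
    simp only [eval_add, eval_sub, eval_mul, eval_C, eval_X]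
    ring
  rw [← gaussianFunctional_apply ha b, map_add, map_sub, C_mul', C_mul', map_smul, map_smul,
    smul_eq_mul, smul_eq_mul] at hparts
  linarith

lemma gaussianFunctional_physHermite_one :
    gaussianFunctional ha b (physHermite 1) = b / a * gaussianFunctional ha b (physHermite 0) := by
  have h := gaussianFunctional_X_mul ha b (physHermite 0)
  simp only [physHermite, mul_one, derivative_one, map_zero, add_zero] at h ⊢
  rw [C_mul', map_smul, smul_eq_mul]
  field_simp
  linarith

lemma gaussianFunctional_physHermite_add_two (n : ℕ) :
    gaussianFunctional ha b (physHermite (n + 2))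
      = b / a * gaussianFunctional ha b (physHermite (n + 1))
        + 2 * ((n : ℝ) + 1) * (a⁻¹ - 1) * gaussianFunctional ha b (physHermite n) := by
  have h := gaussianFunctional_X_mul ha b (physHermite (n + 1))
  rw [derivative_physHermite_succ, C_mul', map_smul, smul_eq_mul] at h
  rw [physHermite_add_two, map_sub, mul_assoc, C_mul', C_mul', map_smul, map_smul, smul_eq_mul,
    smul_eq_mul]
  field_simp
  linarith

end

theorem beta_three_term_recurrence_general
    (σ μ : ℝ) (hσ0 : 0 < σ) :
    (∀ p : ℕ, 2 ≤ p →
      (∫ x : ℝ, Real.exp (-(σ ^ 2)⁻¹ * x ^ 2 + 2 * μ * (σ ^ 2)⁻¹ * x) *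
          (physHermite p).eval x)
        = 2 * μ * (∫ x : ℝ, Real.exp (-(σ ^ 2)⁻¹ * x ^ 2 + 2 * μ * (σ ^ 2)⁻¹ * x) *
            (physHermite (p - 1)).eval x)
          + 2 * ((p : ℝ) - 1) * (σ ^ 2 - 1) *
            (∫ x : ℝ, Real.exp (-(σ ^ 2)⁻¹ * x ^ 2 + 2 * μ * (σ ^ 2)⁻¹ * x) *
              (physHermite (p - 2)).eval x))
    ∧
    (∫ x : ℝ, Real.exp (-(σ ^ 2)⁻¹ * x ^ 2 + 2 * μ * (σ ^ 2)⁻¹ * x) *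
        (physHermite 1).eval x)
      = 2 * μ * ∫ x : ℝ, Real.exp (-(σ ^ 2)⁻¹ * x ^ 2 + 2 * μ * (σ ^ 2)⁻¹ * x) *
          (physHermite 0).eval x := by
  have ha : 0 < (σ ^ 2)⁻¹ := by positivity
  have hba : 2 * μ * (σ ^ 2)⁻¹ / (σ ^ 2)⁻¹ = 2 * μ := mul_div_cancel_right₀ _ ha.ne'
  simp only [← gaussianFunctional_apply ha]
  refine ⟨fun p hp => ?_, ?_⟩
  · obtain ⟨n, rfl⟩ := Nat.exists_eq_add_of_le' hp
    rw [gaussianFunctional_physHermite_add_two, hba, inv_inv, Nat.add_sub_cancel,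
      show n + 2 - 1 = n + 1 by omega]
    push_cast
    ring
  · rw [gaussianFunctional_physHermite_one, hba]

/-- The sequence `b_p = ∫ e^{-x²/σ² + 2μx/σ²} H_p(x) dx` satisfies the three-term
recurrence `b_p = 2μ b_{p-1} + 2(p-1)(σ²-1) b_{p-2}` for `p ≥ 2`, and `b_1 = 2μ b_0`. -/
theorem beta_three_term_recurrence
    (σ μ : ℝ) (hσ0 : 0 < σ) (hσ1 : σ ≠ 1) :
    (∀ p : ℕ, 2 ≤ p →
      (∫ x : ℝ, Real.exp (-(σ ^ 2)⁻¹ * x ^ 2 + 2 * μ * (σ ^ 2)⁻¹ * x) *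
          (physHermite p).eval x)
        = 2 * μ * (∫ x : ℝ, Real.exp (-(σ ^ 2)⁻¹ * x ^ 2 + 2 * μ * (σ ^ 2)⁻¹ * x) *
            (physHermite (p - 1)).eval x)
          + 2 * ((p : ℝ) - 1) * (σ ^ 2 - 1) *
            (∫ x : ℝ, Real.exp (-(σ ^ 2)⁻¹ * x ^ 2 + 2 * μ * (σ ^ 2)⁻¹ * x) *
              (physHermite (p - 2)).eval x))
    ∧
    (∫ x : ℝ, Real.exp (-(σ ^ 2)⁻¹ * x ^ 2 + 2 * μ * (σ ^ 2)⁻¹ * x) *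
        (physHermite 1).eval x)
      = 2 * μ * ∫ x : ℝ, Real.exp (-(σ ^ 2)⁻¹ * x ^ 2 + 2 * μ * (σ ^ 2)⁻¹ * x) *
          (physHermite 0).eval x :=
  beta_three_term_recurrence_general σ μ hσ0
end
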